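/- If the instance admits a feasible schedule, then for every nonempty subset Q ⊆ P one has Δ ≥ min_{q ∈ Q} ( c(r,q) + δ + min{|Q|, n−1} ). -/
import Mathlib


/-- A vehicle-routing instance: a finite set `P` of items, a root `r ∉ P`,
a placement `μ₀` of root and items in a metric space `M`, a delivery time
`δ ≥ 1`, and a deadline `Δ > 0`. -/
structure VRInstance (α M : Type*) [MetricSpace M] where
  P : Finset α
  r : α
  r_not_item : r ∉ P
  P_nonempty : P.Nonempty
  μ₀ : α → M
  δ : ℝ
  one_le_δ : 1 ≤ δ
  Δ : ℝ
  Δ_pos : 0 < Δ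

variable {α M : Type*} [MetricSpace M]

/-- A schedule: a finite arborescence `(W, A)` rooted at `I.r` with
`{r} ∪ P ⊆ W`, out-degree at most 2 everywhere, out-degree at most 1 on items,
together with a placement `μ : W → M` extending `μ₀` on `{r} ∪ P`. -/
structure Schedule {α M : Type*} [MetricSpace M] (I : VRInstance α M) where
  W : Set α
  A : Set (α × α)
  μ : α → M
  finite_W : W.Finite
  root_mem : I.r ∈ W
  items_subset : ↑I.P ⊆ W
  arcs_subset : ∀ a ∈ A, a.1 ∈ W ∧ a.2 ∈ W
  no_arc_into_root : ∀ u, (u, I.r) ∉ A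
  unique_in_arc : ∀ v ∈ W, v ≠ I.r → ∃! u, (u, v) ∈ A
  reachable : ∀ v ∈ W, Relation.ReflTransGen (fun u w => (u, w) ∈ A) I.r v
  outdeg_le_two : ∀ v ∈ W, {x | (v, x) ∈ A}.ncard ≤ 2
  items_outdeg_le_one : ∀ p ∈ I.P, {x | (p, x) ∈ A}.ncard ≤ 1
  μ_placement : ∀ v ∈ insert I.r (↑I.P : Set α), μ v = I.μ₀ v

namespace Schedule

variable {I : VRInstance α M} (S : Schedule I)

/-- Reachability along arcs of the schedule. -/
def reach (u v : α) : Prop := Relation.ReflTransGen (fun a b => (a, b) ∈ S.A) u v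

/-- `W_{x*}`: the vertex set of the maximal subarborescence rooted at `x`. -/
def desc (x : α) : Set α := {y ∈ S.W | S.reach x y}

/-- `W_{ry}`: the vertex set of the directed `r`–`y` path. -/
def pathSet (y : α) : Set α := {u ∈ S.W | S.reach I.r u ∧ S.reach u y}

/-- The arcs on the directed `r`–`y` path. -/
def pathArcs (y : α) : Set (α × α) :=
  {a ∈ S.A | a.1 ∈ S.pathSet y ∧ a.2 ∈ S.pathSet y}

/-- Out-degree of a vertex. -/
noncomputable def outDeg (v : α) : ℕ := {x | (v, x) ∈ S.A}.ncard

/-- The handover delay at a bifurcation node `w`: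
`min_{x child of w} |P ∩ W_{x*}|`. -/
noncomputable def handover (w : α) : ℕ :=
  sInf {k : ℕ | ∃ x, (w, x) ∈ S.A ∧ k = ((↑I.P : Set α) ∩ S.desc x).ncard}

/-- The delay of vertex `y`: travel time along the `r`–`y` path, plus delivery
time `δ` for each item on the path, plus handover delays at bifurcation nodes
on the path. -/
noncomputable def delayTo (y : α) : ℝ :=
  (∑ᶠ a ∈ S.pathArcs y, dist (S.μ a.1) (S.μ a.2))
    + I.δ * ((↑I.P : Set α) ∩ S.pathSet y).ncard
    + ∑ᶠ w ∈ {u ∈ S.pathSet y | S.outDeg u = 2}, (S.handover w : ℝ)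

/-- The delay of the schedule: the maximum delay of an item. -/
noncomputable def delay : ℝ := I.P.sup' I.P_nonempty fun p => S.delayTo p

/-- A schedule is feasible if its delay is at most the deadline. -/
def Feasible : Prop := S.delay ≤ I.Δ

/-- The length (travel cost) of the schedule. -/
noncomputable def length : ℝ := ∑ᶠ a ∈ S.A, dist (S.μ a.1) (S.μ a.2)

/-- The leaves of the schedule (one vehicle per leaf). -/
def leaves : Set α := {v ∈ S.W | S.outDeg v = 0}

/-- The cost of the schedule for setup cost `σ`: length plus `σ` per vehicle. -/
noncomputable def cost (σ : ℝ) : ℝ := S.length + σ * S.leaves.ncard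


end Schedule

/-- The minimum length of a tree with vertex set `{r} ∪ P`,
with edges weighted by the metric distance. -/
noncomputable def mstLength [DecidableEq α] (I : VRInstance α M) : ℝ :=
  sInf {x : ℝ | ∃ T : SimpleGraph ↥(insert I.r I.P), T.IsTree ∧
    x = ∑ᶠ e ∈ T.edgeSet,
      (Sym2.lift ⟨fun u v => dist (I.μ₀ u) (I.μ₀ v), fun u v => dist_comm _ _⟩ : Sym2 ↥(insert I.r I.P) → ℝ) e}


namespace Schedule

variable {I : VRInstance α M} (S : Schedule I)

/-- Segment of the tree path from `v` to `y`. -/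
def seg (v y : α) : Set α := {u ∈ S.W | S.reach v u ∧ S.reach u y}

lemma pathSet_eq_seg (y : α) : S.pathSet y = S.seg I.r y := rfl

lemma finite_A : S.A.Finite := by
  have h : S.A ⊆ S.W ×ˢ S.W := fun a ha =>
    Set.mk_mem_prod (S.arcs_subset a ha).1 (S.arcs_subset a ha).2
  exact (S.finite_W.prod S.finite_W).subset h

lemma finite_desc (x : α) : (S.desc x).Finite := S.finite_W.subset fun y hy => hy.1

lemma finite_seg (v y : α) : (S.seg v y).Finite := S.finite_W.subset fun u hu => hu.1

lemma finite_pathArcs (y : α) : (S.pathArcs y).Finite :=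
  S.finite_A.subset fun a ha => ha.1

lemma noloop : ∀ v, S.reach I.r v → (v, v) ∉ S.A := by
  intro v hv
  induction hv with
  | refl => exact S.no_arc_into_root I.r
  | @tail b c hrb hbc ih =>
    intro hcc
    have hcW : c ∈ S.W := (S.arcs_subset _ hbc).2
    have hcr : c ≠ I.r := fun h => S.no_arc_into_root b (h ▸ hbc)
    obtain ⟨u, hu, huniq⟩ := S.unique_in_arc c hcW hcr
    have hbc' : b = c := (huniq b hbc).trans (huniq c hcc).symm
    subst hbc'
    exact ih hcc

lemma antisym : ∀ v, S.reach I.r v → ∀ u, S.reach v u → S.reach u v → u = v := by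
  intro v hv
  induction hv with
  | refl =>
    intro u _ hur
    rcases hur.cases_tail with h | ⟨b, _, hbr⟩
    · exact h.symm
    · exact absurd hbr (S.no_arc_into_root b)
  | @tail w v hrw hwv ih =>
    intro u hvu huv
    rcases huv.cases_tail with h | ⟨b, hub, hbv⟩
    · exact h.symm
    · have hvW : v ∈ S.W := (S.arcs_subset _ hwv).2
      have hvr : v ≠ I.r := fun h => S.no_arc_into_root w (h ▸ hwv)
      obtain ⟨u', hu', huniq⟩ := S.unique_in_arc v hvW hvr
      have hbw : b = w := (huniq b hbv).trans (huniq w hwv).symm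
      subst hbw
      have hwu : S.reach b u := Relation.ReflTransGen.head hbv hvu
      have huw : u = b := ih u hwu hub
      subst huw
      have hvb : v = u := ih v (Relation.ReflTransGen.single hbv) hvu
      subst hvb
      exact absurd hbv (S.noloop v (hrw.tail hwv))

lemma disj : ∀ v b x, S.reach I.r v → (v, b) ∈ S.A → (v, x) ∈ S.A → b ≠ x →
    ∀ z, S.reach b z → S.reach x z → False := by
  intro v b x hrv hvb hvx hbx z hbz
  induction hbz with
  | refl =>
    intro hxb
    rcases hxb.cases_tail with h | ⟨c, hxc, hcb⟩
    · exact hbx h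
    · have hbW : b ∈ S.W := (S.arcs_subset _ hvb).2
      have hbr : b ≠ I.r := fun h => S.no_arc_into_root v (h ▸ hvb)
      obtain ⟨u, hu, huniq⟩ := S.unique_in_arc b hbW hbr
      have hcv : c = v := (huniq c hcb).trans (huniq v hvb).symm
      rw [hcv] at hxc
      have hxv : x = v := S.antisym v hrv x (Relation.ReflTransGen.single hvx) hxc
      rw [hxv] at hvx
      exact S.noloop v hrv hvx
  | @tail w z hbw hwz ih =>
    intro hxz
    rcases hxz.cases_tail with h | ⟨c, hxc, hcz⟩
    · subst h
      have hxW : z ∈ S.W := (S.arcs_subset _ hvx).2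
      have hxr : z ≠ I.r := fun h => S.no_arc_into_root v (h ▸ hvx)
      obtain ⟨u, hu, huniq⟩ := S.unique_in_arc z hxW hxr
      have hwv : w = v := (huniq w hwz).trans (huniq v hvx).symm
      subst hwv
      have hbv : b = w := S.antisym w hrv b (Relation.ReflTransGen.single hvb) hbw
      subst hbv
      exact S.noloop b hrv hvb
    · have hzW : z ∈ S.W := (S.arcs_subset _ hwz).2
      have hzr : z ≠ I.r := fun h => S.no_arc_into_root w (h ▸ hwz)
      obtain ⟨u, hu, huniq⟩ := S.unique_in_arc z hzW hzr
      have hcw : c = w := (huniq c hcz).trans (huniq w hwz).symm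
      subst hcw
      exact ih hxc

lemma desc_self (hv : v ∈ S.W) : v ∈ S.desc v := ⟨hv, Relation.ReflTransGen.refl⟩

lemma seg_subset_desc (v y : α) : S.seg v y ⊆ S.desc v := fun u hu => ⟨hu.1, hu.2.1⟩

lemma desc_child_subset (hvx : (v, x) ∈ S.A) : S.desc x ⊆ S.desc v :=
  fun u hu => ⟨hu.1, Relation.ReflTransGen.head hvx hu.2⟩

lemma notMem_desc_child (hrv : S.reach I.r v) (hvx : (v, x) ∈ S.A) : v ∉ S.desc x := by
  intro hv
  have hxv : x = v := S.antisym v hrv x (Relation.ReflTransGen.single hvx) hv.2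
  subst hxv
  exact S.noloop x hrv hvx

lemma ncard_desc_child_lt (hrv : S.reach I.r v) (hvW : v ∈ S.W) (hvx : (v, x) ∈ S.A) :
    (S.desc x).ncard < (S.desc v).ncard := by
  refine Set.ncard_lt_ncard ?_ (S.finite_desc v)
  refine ssubset_of_subset_of_ne (S.desc_child_subset hvx) (fun h => ?_)
  exact S.notMem_desc_child hrv hvx (h.symm ▸ S.desc_self hvW)

lemma ch_cases (hv : v ∈ S.W) :
    {x | (v, x) ∈ S.A} = ∅ ∨ (∃ x, {x | (v, x) ∈ S.A} = {x}) ∨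
      ∃ x y, x ≠ y ∧ {x | (v, x) ∈ S.A} = {x, y} := by
  have hfin : {x | (v, x) ∈ S.A}.Finite :=
    S.finite_W.subset fun x hx => (S.arcs_subset _ hx).2
  have hle := S.outdeg_le_two v hv
  have h3 : {x | (v, x) ∈ S.A}.ncard = 0 ∨ {x | (v, x) ∈ S.A}.ncard = 1 ∨
      {x | (v, x) ∈ S.A}.ncard = 2 := by omega
  rcases h3 with h | h | h
  · exact Or.inl ((Set.ncard_eq_zero hfin).mp h)
  · exact Or.inr (Or.inl (Set.ncard_eq_one.mp h))
  · exact Or.inr (Or.inr (Set.ncard_eq_two.mp h))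

lemma desc_eq_leaf (hv : v ∈ S.W) (hC : {x | (v, x) ∈ S.A} = ∅) : S.desc v = {v} := by
  ext u
  constructor
  · rintro ⟨huW, hvu⟩
    rcases hvu.cases_head with h | ⟨b, hvb, _⟩
    · exact h.symm
    · exact absurd (show b ∈ {x | (v, x) ∈ S.A} from hvb) (by rw [hC]; exact id)
  · rintro rfl
    exact S.desc_self hv

lemma desc_eq_single (hv : v ∈ S.W) (hC : {b | (v, b) ∈ S.A} = {x}) :
    S.desc v = insert v (S.desc x) := by
  have hvx : (v, x) ∈ S.A := by
    have : x ∈ {b | (v, b) ∈ S.A} := by rw [hC]; rfl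
    exact this
  ext u
  constructor
  · rintro ⟨huW, hvu⟩
    rcases hvu.cases_head with h | ⟨b, hvb, hbu⟩
    · exact Or.inl h.symm
    · have hbx : b ∈ ({x} : Set α) := hC ▸ hvb
      rw [Set.mem_singleton_iff] at hbx
      subst hbx
      exact Or.inr ⟨huW, hbu⟩
  · rintro (rfl | hu)
    · exact S.desc_self hv
    · exact ⟨hu.1, Relation.ReflTransGen.head hvx hu.2⟩

lemma desc_eq_pair (hv : v ∈ S.W) (hxy : x ≠ y) (hC : {b | (v, b) ∈ S.A} = {x, y}) :
    S.desc v = insert v (S.desc x ∪ S.desc y) := by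
  have hvx : (v, x) ∈ S.A := by
    have : x ∈ {b | (v, b) ∈ S.A} := by rw [hC]; exact Or.inl rfl
    exact this
  have hvy : (v, y) ∈ S.A := by
    have : y ∈ {b | (v, b) ∈ S.A} := by rw [hC]; exact Or.inr rfl
    exact this
  ext u
  constructor
  · rintro ⟨huW, hvu⟩
    rcases hvu.cases_head with h | ⟨b, hvb, hbu⟩
    · exact Or.inl h.symm
    · have hbx : b ∈ ({x, y} : Set α) := hC ▸ hvb
      rcases hbx with rfl | rfl
      · exact Or.inr (Or.inl ⟨huW, hbu⟩)
      · exact Or.inr (Or.inr ⟨huW, hbu⟩)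
  · rintro (rfl | hu | hu)
    · exact S.desc_self hv
    · exact ⟨hu.1, Relation.ReflTransGen.head hvx hu.2⟩
    · exact ⟨hu.1, Relation.ReflTransGen.head hvy hu.2⟩

lemma seg_eq_insert (hrv : S.reach I.r v) (hvW : v ∈ S.W) (hvc : (v, c) ∈ S.A)
    (hp : p ∈ S.desc c) : S.seg v p = insert v (S.seg c p) := by
  ext u
  constructor
  · rintro ⟨huW, hvu, hup⟩
    rcases hvu.cases_head with h | ⟨b, hvb, hbu⟩
    · exact Or.inl h.symm
    · by_cases hbc : b = c
      · subst hbc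
        exact Or.inr ⟨huW, hbu, hup⟩
      · exact (S.disj v b c hrv hvb hvc hbc p (hbu.trans hup) hp.2).elim
  · rintro (rfl | ⟨huW, hcu, hup⟩)
    · exact ⟨hvW, Relation.ReflTransGen.refl, Relation.ReflTransGen.head hvc hp.2⟩
    · exact ⟨huW, Relation.ReflTransGen.head hvc hcu, hup⟩


open scoped Classical in
lemma ncard_inter_insert' {T s : Set α} {v : α} (hv : v ∉ s) (hs : s.Finite) :
    (T ∩ insert v s).ncard = (if v ∈ T then 1 else 0) + (T ∩ s).ncard := by
  classical
  rw [Set.inter_comm T (insert v s), Set.inter_comm T s]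
  by_cases h : v ∈ T
  · rw [if_pos h, Set.insert_inter_of_mem h,
      Set.ncard_insert_of_notMem (fun hx => hv hx.1) (hs.inter_of_left T)]
    omega
  · rw [if_neg h, Set.insert_inter_of_notMem h]
    omega

noncomputable def gP (v : α) : ℕ := ((↑I.P : Set α) ∩ S.desc v).ncard

noncomputable def cnt (v p : α) : ℕ := ((↑I.P : Set α) ∩ S.seg v p).ncard

noncomputable def Hnat (v p : α) : ℕ :=
  ∑ᶠ w ∈ {u ∈ S.seg v p | S.outDeg u = 2}, S.handover w

lemma Hnat_insert {v c p : α} (hseg : S.seg v p = insert v (S.seg c p))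
    (hv : v ∉ S.seg c p) :
    S.Hnat v p = (if S.outDeg v = 2 then S.handover v else 0) + S.Hnat c p := by
  classical
  unfold Hnat
  rw [hseg]
  have hsetfin : {u ∈ S.seg c p | S.outDeg u = 2}.Finite :=
    (S.finite_seg c p).subset (Set.sep_subset _ _)
  have hsep : {u ∈ insert v (S.seg c p) | S.outDeg u = 2}
      = if S.outDeg v = 2 then insert v {u ∈ S.seg c p | S.outDeg u = 2}
        else {u ∈ S.seg c p | S.outDeg u = 2} := by
    split_ifs with h
    · ext u
      by_cases hu : u = v
      · subst hu; simp [h]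
      · simp [hu]
    · ext u
      by_cases hu : u = v
      · subst hu; simp [h]
      · simp [hu]
  rw [hsep]
  split_ifs with h
  · rw [finsum_mem_insert _ (fun hx => hv hx.1) hsetfin]
  · simp

lemma handover_pair {v x y : α} (hxy : x ≠ y) (hC : {b | (v, b) ∈ S.A} = {x, y}) :
    S.handover v = min (S.gP x) (S.gP y) := by
  have hvx : (v, x) ∈ S.A := by
    have : x ∈ {b | (v, b) ∈ S.A} := by rw [hC]; exact Or.inl rfl
    exact this
  have hvy : (v, y) ∈ S.A := by
    have : y ∈ {b | (v, b) ∈ S.A} := by rw [hC]; exact Or.inr rfl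
    exact this
  have hset : {k : ℕ | ∃ c, (v, c) ∈ S.A ∧ k = ((↑I.P : Set α) ∩ S.desc c).ncard}
      = {S.gP x, S.gP y} := by
    ext k
    simp only [Set.mem_setOf_eq, Set.mem_insert_iff, Set.mem_singleton_iff]
    constructor
    · rintro ⟨c, hc, rfl⟩
      have hcm : c ∈ ({x, y} : Set α) := hC ▸ hc
      rcases hcm with rfl | rfl
      · exact Or.inl rfl
      · exact Or.inr rfl
    · rintro (rfl | rfl)
      · exact ⟨x, hvx, rfl⟩
      · exact ⟨y, hvy, rfl⟩
  show sInf _ = _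
  rw [hset]
  apply le_antisymm
  · rcases le_total (S.gP x) (S.gP y) with h | h
    · rw [min_eq_left h]; exact Nat.sInf_le (Or.inl rfl)
    · rw [min_eq_right h]; exact Nat.sInf_le (Or.inr rfl)
  · refine le_csInf ⟨S.gP x, Or.inl rfl⟩ ?_
    rintro b (rfl | rfl)
    · exact min_le_left _ _
    · exact min_le_right _ _

lemma finsum_mem_nonneg' {β : Type*} {s : Set β} {f : β → ℝ} (hf : ∀ x, 0 ≤ f x)
    (hs : s.Finite) : 0 ≤ ∑ᶠ x ∈ s, f x := by
  rw [← hs.coe_toFinset, finsum_mem_coe_finset]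
  exact Finset.sum_nonneg fun i _ => hf i

lemma finsum_mem_le' {β : Type*} {s t : Set β} {f : β → ℝ} (hf : ∀ x, 0 ≤ f x)
    (hst : s ⊆ t) (ht : t.Finite) : ∑ᶠ x ∈ s, f x ≤ ∑ᶠ x ∈ t, f x := by
  have hs := ht.subset hst
  rw [← hs.coe_toFinset, ← ht.coe_toFinset, finsum_mem_coe_finset, finsum_mem_coe_finset]
  refine Finset.sum_le_sum_of_subset_of_nonneg ?_ fun i _ _ => hf i
  intro i hi
  rw [Set.Finite.mem_toFinset] at hi ⊢
  exact hst hi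

lemma travel_ge : ∀ y, S.reach I.r y →
    dist (S.μ I.r) (S.μ y) ≤ ∑ᶠ a ∈ S.pathArcs y, dist (S.μ a.1) (S.μ a.2) := by
  intro y hy
  induction hy with
  | refl =>
    simpa using finsum_mem_nonneg' (f := fun a : α × α => dist (S.μ a.1) (S.μ a.2))
      (fun a => dist_nonneg) (S.finite_pathArcs I.r)
  | @tail w y hrw hwy ih =>
    have hwW : w ∈ S.W := (S.arcs_subset _ hwy).1
    have hyW : y ∈ S.W := (S.arcs_subset _ hwy).2
    have hry : S.reach I.r y := hrw.tail hwy
    have harc : (w, y) ∈ S.pathArcs y :=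
      ⟨hwy, ⟨hwW, hrw, Relation.ReflTransGen.single hwy⟩,
        ⟨hyW, hry, Relation.ReflTransGen.refl⟩⟩
    have hsub : insert (w, y) (S.pathArcs w) ⊆ S.pathArcs y := by
      rintro a (rfl | ⟨ha, h1, h2⟩)
      · exact harc
      · exact ⟨ha, ⟨h1.1, h1.2.1, h1.2.2.tail hwy⟩, ⟨h2.1, h2.2.1, h2.2.2.tail hwy⟩⟩
    have hnm : (w, y) ∉ S.pathArcs w := by
      rintro ⟨-, -, hyp⟩
      have hyw : y = w := S.antisym w hrw y (Relation.ReflTransGen.single hwy) hyp.2.2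
      rw [hyw] at hwy
      exact S.noloop w hrw hwy
    have h1 : dist (S.μ I.r) (S.μ y) ≤ dist (S.μ I.r) (S.μ w) + dist (S.μ w) (S.μ y) :=
      dist_triangle _ _ _
    have h2 : ∑ᶠ a ∈ insert (w, y) (S.pathArcs w), dist (S.μ a.1) (S.μ a.2)
        = dist (S.μ w) (S.μ y) + ∑ᶠ a ∈ S.pathArcs w, dist (S.μ a.1) (S.μ a.2) :=
      finsum_mem_insert _ hnm (S.finite_pathArcs w)
    have h3 := finsum_mem_le' (f := fun a : α × α => dist (S.μ a.1) (S.μ a.2))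
      (fun a => dist_nonneg) hsub (S.finite_pathArcs y)
    rw [h2] at h3
    linarith

lemma Hnat_cast (v p : α) :
    ((S.Hnat v p : ℕ) : ℝ)
      = ∑ᶠ w ∈ {u ∈ S.seg v p | S.outDeg u = 2}, (S.handover w : ℝ) := by
  have hfin : {u ∈ S.seg v p | S.outDeg u = 2}.Finite :=
    (S.finite_seg v p).subset (Set.sep_subset _ _)
  unfold Hnat
  rw [← hfin.coe_toFinset, finsum_mem_coe_finset, finsum_mem_coe_finset, Nat.cast_sum]


lemma main_bound (Q : Finset α) (hQP : Q ⊆ I.P) :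
    ∀ N, ∀ v, v ∈ S.W → (S.desc v).ncard ≤ N → S.reach I.r v →
      ((↑Q : Set α) ∩ S.desc v).Nonempty →
      ∃ p q, p ∈ I.P ∧ p ∈ S.desc v ∧ q ∈ Q ∧ S.reach v q ∧ S.reach q p ∧
        min (S.gP v) (((↑Q : Set α) ∩ S.desc v).ncard + 1) ≤ S.cnt v p + S.Hnat v p := by
  intro N
  induction N with
  | zero =>
    intro v hvW hN _ _
    have := (Set.ncard_pos (S.finite_desc v)).mpr ⟨v, S.desc_self hvW⟩
    omega
  | succ N ih =>
    intro v hvW hN hrv hQv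
    classical
    have hQPc : (↑Q : Set α) ⊆ (↑I.P : Set α) := fun z hz => Finset.mem_coe.mpr (hQP (Finset.mem_coe.mp hz))
    rcases S.ch_cases hvW with hC | ⟨x, hC⟩ | ⟨x, y, hxy, hC⟩
    · -- leaf
      have hdesc := S.desc_eq_leaf hvW hC
      obtain ⟨z, hzQ, hzd⟩ := hQv
      rw [hdesc, Set.mem_singleton_iff] at hzd
      subst hzd
      have hvP : z ∈ I.P := hQP (Finset.mem_coe.mp hzQ)
      refine ⟨z, z, hvP, S.desc_self hvW, Finset.mem_coe.mp hzQ,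
        Relation.ReflTransGen.refl, Relation.ReflTransGen.refl, ?_⟩
      have h1 : 1 ≤ S.cnt z z := by
        refine (Set.ncard_pos (S.finite_W.subset ?_)).mpr
          ⟨z, Finset.mem_coe.mpr hvP, hvW, Relation.ReflTransGen.refl, Relation.ReflTransGen.refl⟩
        exact fun u hu => hu.2.1
      have h2 : S.gP z ≤ 1 := by
        unfold gP
        rw [hdesc]
        exact le_trans (Set.ncard_le_ncard Set.inter_subset_right (Set.finite_singleton z))
          (le_of_eq (Set.ncard_singleton z))
      omega
    · -- one child x
      have hvx : (v, x) ∈ S.A := by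
        have : x ∈ {b | (v, b) ∈ S.A} := by rw [hC]; rfl
        exact this
      have hdesc := S.desc_eq_single hvW hC
      have hvnd : v ∉ S.desc x := S.notMem_desc_child hrv hvx
      have hxW : x ∈ S.W := (S.arcs_subset _ hvx).2
      have hrx : S.reach I.r x := hrv.tail hvx
      have hcard : (S.desc x).ncard ≤ N := by
        have := S.ncard_desc_child_lt hrv hvW hvx
        omega
      have hdeg : S.outDeg v = 1 := by
        show {b | (v, b) ∈ S.A}.ncard = 1
        rw [hC]; exact Set.ncard_singleton x
      by_cases hQx : ((↑Q : Set α) ∩ S.desc x).Nonempty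
      · obtain ⟨p, q, hpP, hpd, hqQ, hxq, hqp, hbound⟩ := ih x hxW hcard hrx hQx
        refine ⟨p, q, hpP, S.desc_child_subset hvx hpd, hqQ,
          Relation.ReflTransGen.head hvx hxq, hqp, ?_⟩
        have hseg := S.seg_eq_insert hrv hvW hvx hpd
        have hvns : v ∉ S.seg x p := fun h => hvnd (S.seg_subset_desc x p h)
        have hcnt : S.cnt v p = (if v ∈ (↑I.P : Set α) then 1 else 0) + S.cnt x p := by
          unfold cnt
          rw [hseg, ncard_inter_insert' hvns (S.finite_seg x p)]
          split_ifs <;> rfl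
        have hgP : S.gP v = (if v ∈ (↑I.P : Set α) then 1 else 0) + S.gP x := by
          unfold gP
          rw [hdesc, ncard_inter_insert' hvnd (S.finite_desc x)]
          split_ifs <;> rfl
        have hgQ : ((↑Q : Set α) ∩ S.desc v).ncard
            = (if v ∈ (↑Q : Set α) then 1 else 0) + ((↑Q : Set α) ∩ S.desc x).ncard := by
          rw [hdesc, ncard_inter_insert' hvnd (S.finite_desc x)]
          split_ifs <;> rfl
        have hH : S.Hnat v p = S.Hnat x p := by
          rw [S.Hnat_insert hseg hvns, hdeg]
          simp
        have hle : (if v ∈ (↑Q : Set α) then 1 else 0) ≤ (if v ∈ (↑I.P : Set α) then 1 else 0) := by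
          split_ifs with h1 h2
          · omega
          · exact absurd (hQPc h1) h2
          · omega
          · omega
        omega
      · -- v itself is the Q-element
        obtain ⟨z, hzQ, hzd⟩ := hQv
        rw [hdesc] at hzd
        rcases hzd with rfl | hzx
        · have hvQ : z ∈ Q := Finset.mem_coe.mp hzQ
          have hvP : z ∈ I.P := hQP hvQ
          have hQs : (↑Q : Set α) ∩ S.desc z = {z} := by
            ext u
            constructor
            · rintro ⟨huQ, hud⟩
              rw [hdesc] at hud
              rcases hud with rfl | hux
              · rfl
              · exact absurd ⟨huQ, hux⟩ (fun h => hQx ⟨u, h⟩)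
            · rintro rfl
              exact ⟨hzQ, S.desc_self hvW⟩
          have hgQ1 : ((↑Q : Set α) ∩ S.desc z).ncard = 1 := by
            rw [hQs]; exact Set.ncard_singleton z
          by_cases hgPx : S.gP x = 0
          · have hgP : S.gP z ≤ 1 := by
              unfold gP
              rw [hdesc, ncard_inter_insert' hvnd (S.finite_desc x),
                if_pos (Finset.mem_coe.mpr hvP)]
              have hx0 : ((↑I.P : Set α) ∩ S.desc x).ncard = 0 := hgPx
              omega
            refine ⟨z, z, hvP, S.desc_self hvW, hvQ,
              Relation.ReflTransGen.refl, Relation.ReflTransGen.refl, ?_⟩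
            have h1 : 1 ≤ S.cnt z z :=
              (Set.ncard_pos (S.finite_W.subset fun u hu => hu.2.1)).mpr
                ⟨z, Finset.mem_coe.mpr hvP, hvW, Relation.ReflTransGen.refl,
                  Relation.ReflTransGen.refl⟩
            omega
          · obtain ⟨p, hpP, hpd⟩ := (Set.ncard_pos
                ((S.finite_desc x).inter_of_right _)).mp (by omega : 0 < S.gP x)
            have hvp : S.reach z p := Relation.ReflTransGen.head hvx hpd.2
            refine ⟨p, z, Finset.mem_coe.mp hpP, S.desc_child_subset hvx hpd, hvQ,
              Relation.ReflTransGen.refl, hvp, ?_⟩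
            have hzp : z ≠ p := fun h => hvnd (h ▸ hpd)
            have hsub : ({z, p} : Set α) ⊆ (↑I.P : Set α) ∩ S.seg z p := by
              rintro u (rfl | rfl)
              · exact ⟨Finset.mem_coe.mpr hvP, hvW, Relation.ReflTransGen.refl, hvp⟩
              · exact ⟨hpP, hpd.1, hvp, Relation.ReflTransGen.refl⟩
            have h2 : 2 ≤ S.cnt z p := by
              have := Set.ncard_le_ncard hsub (S.finite_W.subset fun u hu => hu.2.1)
              rw [Set.ncard_pair hzp] at this
              exact this
            omega
        · exact absurd ⟨z, hzQ, hzx⟩ hQx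
    · -- two children x y
      have hvx : (v, x) ∈ S.A := by
        have : x ∈ {b | (v, b) ∈ S.A} := by rw [hC]; exact Or.inl rfl
        exact this
      have hvy : (v, y) ∈ S.A := by
        have : y ∈ {b | (v, b) ∈ S.A} := by rw [hC]; exact Or.inr rfl
        exact this
      have hdeg2 : S.outDeg v = 2 := by
        show {b | (v, b) ∈ S.A}.ncard = 2
        rw [hC]; exact Set.ncard_pair hxy
      have hvP : v ∉ (↑I.P : Set α) := by
        intro h
        have h1 := S.items_outdeg_le_one v (Finset.mem_coe.mp h)
        have h2 : {b | (v, b) ∈ S.A}.ncard = 2 := hdeg2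
        omega
      have hvnx : v ∉ S.desc x := S.notMem_desc_child hrv hvx
      have hvny : v ∉ S.desc y := S.notMem_desc_child hrv hvy
      have hdisj : Disjoint (S.desc x) (S.desc y) :=
        Set.disjoint_left.mpr fun z hzx hzy =>
          S.disj v x y hrv hvx hvy hxy z hzx.2 hzy.2
      have hdesc := S.desc_eq_pair hvW hxy hC
      have hvnu : v ∉ S.desc x ∪ S.desc y := by
        rintro (h | h)
        · exact hvnx h
        · exact hvny h
      have hsplit : ∀ T : Set α, (T ∩ S.desc v).ncard
          = (if v ∈ T then 1 else 0) + ((T ∩ S.desc x).ncard + (T ∩ S.desc y).ncard) := by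
        intro T
        rw [hdesc, ncard_inter_insert' hvnu ((S.finite_desc x).union (S.finite_desc y)),
          Set.inter_union_distrib_left,
          Set.ncard_union_eq (hdisj.mono Set.inter_subset_right Set.inter_subset_right)
            ((S.finite_desc x).inter_of_right _) ((S.finite_desc y).inter_of_right _)]
      have hgPv : S.gP v = S.gP x + S.gP y := by
        unfold gP
        rw [hsplit, if_neg hvP]
        omega
      have hgQv : ((↑Q : Set α) ∩ S.desc v).ncard
          = ((↑Q : Set α) ∩ S.desc x).ncard + ((↑Q : Set α) ∩ S.desc y).ncard := by
        rw [hsplit, if_neg (fun h => hvP (hQPc h))]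
        omega
      have hho := S.handover_pair hxy hC
      have key : ∀ c d, (v, c) ∈ S.A → c ≠ d →
          S.gP v = S.gP c + S.gP d →
          ((↑Q : Set α) ∩ S.desc v).ncard
            = ((↑Q : Set α) ∩ S.desc c).ncard + ((↑Q : Set α) ∩ S.desc d).ncard →
          S.handover v = min (S.gP c) (S.gP d) →
          ((↑Q : Set α) ∩ S.desc c).Nonempty →
          (((↑Q : Set α) ∩ S.desc d).ncard = 0 ∨ S.gP d ≤ S.gP c) →
          ∃ p q, p ∈ I.P ∧ p ∈ S.desc v ∧ q ∈ Q ∧ S.reach v q ∧ S.reach q p ∧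
            min (S.gP v) (((↑Q : Set α) ∩ S.desc v).ncard + 1) ≤ S.cnt v p + S.Hnat v p := by
        intro c d hvc hcd hgP hgQ hhomin hQc hside
        have hcW : c ∈ S.W := (S.arcs_subset _ hvc).2
        have hrc : S.reach I.r c := hrv.tail hvc
        have hcard : (S.desc c).ncard ≤ N := by
          have := S.ncard_desc_child_lt hrv hvW hvc
          omega
        obtain ⟨p, q, hpP, hpd, hqQ, hcq, hqp, hbound⟩ := ih c hcW hcard hrc hQc
        refine ⟨p, q, hpP, S.desc_child_subset hvc hpd, hqQ,
          Relation.ReflTransGen.head hvc hcq, hqp, ?_⟩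
        have hseg := S.seg_eq_insert hrv hvW hvc hpd
        have hvns : v ∉ S.seg c p := fun h =>
          S.notMem_desc_child hrv hvc (S.seg_subset_desc c p h)
        have hcnt : S.cnt v p = S.cnt c p := by
          unfold cnt
          rw [hseg, ncard_inter_insert' hvns (S.finite_seg c p), if_neg hvP]
          omega
        have hH : S.Hnat v p = S.handover v + S.Hnat c p := by
          rw [S.Hnat_insert hseg hvns, if_pos hdeg2]
        have h1 : ((↑Q : Set α) ∩ S.desc c).ncard ≤ S.gP c :=
          Set.ncard_le_ncard (fun z hz => ⟨hQPc hz.1, hz.2⟩)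
            ((S.finite_desc c).inter_of_right _)
        have h2 : ((↑Q : Set α) ∩ S.desc d).ncard ≤ S.gP d :=
          Set.ncard_le_ncard (fun z hz => ⟨hQPc hz.1, hz.2⟩)
            ((S.finite_desc d).inter_of_right _)
        have h3 : 1 ≤ ((↑Q : Set α) ∩ S.desc c).ncard :=
          (Set.ncard_pos ((S.finite_desc c).inter_of_right _)).mpr hQc
        rw [hcnt, hH, hgP, hgQ, hhomin]
        omega
      by_cases hQx : ((↑Q : Set α) ∩ S.desc x).Nonempty
      · by_cases hPxy : S.gP y ≤ S.gP x
        · exact key x y hvx hxy hgPv hgQv hho hQx (Or.inr hPxy)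
        · by_cases hQy : ((↑Q : Set α) ∩ S.desc y).Nonempty
          · exact key y x hvy (Ne.symm hxy) (by omega) (by omega) (by rw [hho, Nat.min_comm])
              hQy (Or.inr (by omega))
          · refine key x y hvx hxy hgPv hgQv hho hQx (Or.inl ?_)
            rw [Set.not_nonempty_iff_eq_empty.mp hQy]
            simp
      · by_cases hQy : ((↑Q : Set α) ∩ S.desc y).Nonempty
        · refine key y x hvy (Ne.symm hxy) (by omega) (by omega) (by rw [hho, Nat.min_comm])
            hQy (Or.inl ?_)
          rw [Set.not_nonempty_iff_eq_empty.mp hQx]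
          simp
        · obtain ⟨z, hzQ, hzd⟩ := hQv
          rw [hdesc] at hzd
          rcases hzd with rfl | hz | hz
          · exact absurd (hQPc hzQ) hvP
          · exact absurd ⟨z, hzQ, hz⟩ hQx
          · exact absurd ⟨z, hzQ, hz⟩ hQy

end Schedule

/-- **If the instance admits a feasible schedule, then for every nonempty
`Q ⊆ P` one has `Δ ≥ min_{q ∈ Q} ( c(r,q) + δ + min{|Q|, n−1} )`.** -/
theorem deadline_lower_bound_subset (I : VRInstance α M)
    (hfeas : ∃ S : Schedule I, S.Feasible)
    (Q : Finset α) (hQP : Q ⊆ I.P) (hQ : Q.Nonempty) :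
    Q.inf' hQ (fun q => dist (I.μ₀ I.r) (I.μ₀ q) + I.δ
      + ((min Q.card (I.P.card - 1) : ℕ) : ℝ)) ≤ I.Δ := by
  classical
  obtain ⟨S, hS⟩ := hfeas
  obtain ⟨q0, hq0⟩ := hQ
  have hq0W : q0 ∈ S.W := S.items_subset (Finset.mem_coe.mpr (hQP hq0))
  have hQv : ((↑Q : Set α) ∩ S.desc I.r).Nonempty :=
    ⟨q0, Finset.mem_coe.mpr hq0, hq0W, S.reachable q0 hq0W⟩
  obtain ⟨p, q, hpP, hpd, hqQ, hrq, hqp, hbound⟩ :=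
    S.main_bound Q hQP ((S.desc I.r).ncard) I.r S.root_mem le_rfl
      Relation.ReflTransGen.refl hQv
  -- identify gP r and gQ r
  have hPdesc : (↑I.P : Set α) ∩ S.desc I.r = (↑I.P : Set α) :=
    Set.inter_eq_left.mpr fun z hz =>
      ⟨S.items_subset hz, S.reachable z (S.items_subset hz)⟩
  have hQdesc : (↑Q : Set α) ∩ S.desc I.r = (↑Q : Set α) :=
    Set.inter_eq_left.mpr fun z hz =>
      ⟨S.items_subset (Finset.mem_coe.mpr (hQP (Finset.mem_coe.mp hz))),
        S.reachable z (S.items_subset (Finset.mem_coe.mpr (hQP (Finset.mem_coe.mp hz))))⟩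
  have hgPr : S.gP I.r = I.P.card := by
    unfold Schedule.gP
    rw [hPdesc, Set.ncard_coe_finset]
  have hgQr : ((↑Q : Set α) ∩ S.desc I.r).ncard = Q.card := by
    rw [hQdesc, Set.ncard_coe_finset]
  rw [hgPr, hgQr] at hbound
  -- delay of p is at most Δ
  have hpW : p ∈ S.W := S.items_subset (Finset.mem_coe.mpr hpP)
  have hqW : q ∈ S.W := S.items_subset (Finset.mem_coe.mpr (hQP hqQ))
  have hd : S.delayTo p ≤ I.Δ :=
    le_trans (Finset.le_sup' (fun p => S.delayTo p) hpP) hS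
  -- travel lower bound
  have hrp : S.reach I.r p := hrq.trans hqp
  have hsubPA : S.pathArcs q ⊆ S.pathArcs p := by
    rintro a ⟨ha, h1, h2⟩
    exact ⟨ha, ⟨h1.1, h1.2.1, h1.2.2.trans hqp⟩, ⟨h2.1, h2.2.1, h2.2.2.trans hqp⟩⟩
  have htrav : dist (S.μ I.r) (S.μ q)
      ≤ ∑ᶠ a ∈ S.pathArcs p, dist (S.μ a.1) (S.μ a.2) :=
    le_trans (S.travel_ge q hrq)
      (Schedule.finsum_mem_le' (fun a => dist_nonneg) hsubPA (S.finite_pathArcs p))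
  have hμr : S.μ I.r = I.μ₀ I.r := S.μ_placement I.r (Set.mem_insert _ _)
  have hμq : S.μ q = I.μ₀ q :=
    S.μ_placement q (Set.mem_insert_of_mem _ (Finset.mem_coe.mpr (hQP hqQ)))
  rw [hμr, hμq] at htrav
  -- delayTo in terms of cnt and Hnat
  have hdelay : S.delayTo p
      = (∑ᶠ a ∈ S.pathArcs p, dist (S.μ a.1) (S.μ a.2))
        + I.δ * (S.cnt I.r p : ℝ) + ((S.Hnat I.r p : ℕ) : ℝ) := by
    rw [Schedule.Hnat_cast]
    rfl
  -- cnt ≥ 1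
  have hc1 : 1 ≤ S.cnt I.r p := by
    refine (Set.ncard_pos (S.finite_W.subset fun u hu => hu.2.1)).mpr
      ⟨p, Finset.mem_coe.mpr hpP, hpW, hrp, Relation.ReflTransGen.refl⟩
  have hn1 : 1 ≤ I.P.card := Finset.card_pos.mpr I.P_nonempty
  -- pass to the inf'
  refine le_trans (Finset.inf'_le _ hqQ) ?_
  set m := min Q.card (I.P.card - 1) with hm
  have hkey : m + 1 ≤ S.cnt I.r p + S.Hnat I.r p := by omega
  have hkeyR : (m : ℝ) + 1 ≤ (S.cnt I.r p : ℝ) + ((S.Hnat I.r p : ℕ) : ℝ) := by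
    exact_mod_cast hkey
  have hc1R : (1 : ℝ) ≤ (S.cnt I.r p : ℝ) := by exact_mod_cast hc1
  have hδ := I.one_le_δ
  have hmul : I.δ + ((S.cnt I.r p : ℝ) - 1) ≤ I.δ * (S.cnt I.r p : ℝ) := by
    nlinarith
  have hH0 : (0 : ℝ) ≤ ((S.Hnat I.r p : ℕ) : ℝ) := by positivity
  rw [hdelay] at hd
  linarith
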